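/- Suppose K is algebraically closed of characteristic p > 0, and let α, s, t ∈ ℕ satisfy p^α = sf + tg. Then the zero set in K^{2n} of ker φ equals the set of common zeros of the n binomials F₁, …, F_{n−1}, F_{n,p}; that is, V is a set-theoretic complete intersection on binomials in characteristic p. -/

import Mathlib

open MvPolynomial

/-!
The binomials lie in `ker φ` because `φ` turns each of them into a difference of two equal
monomials; for `F_{n,p}` this is an exponent identity that uses `p ^ α = s f + t g`.
Conversely, a common zero `a` of the binomials is the image `φ^*(u)` of a point `u ∈ Kⁿ`, so
every `F ∈ ker φ` vanishes at `a`. To find `u`, take `uₙ` with `uₙ ^ (f g) = xₙ`; because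
`gcd (f - g, f g) = 1`, the two equations `uᵢ ^ (f g) = xᵢ`, `uᵢ ^ (f - g) uₙ ^ (f - g) = yᵢ`
have a common solution. Then `yₙ` and `φ(yₙ)(u)` have the same `p ^ α`-th power, hence are equal
since Frobenius is injective.
-/

-- `φ (F_{n,p}) = 0`, with `v` and `w` standing for `u₁, …, u_{n-1}` and `uₙ`.
theorem last_monomial_pow_eq {M ι : Type*} [CommMonoid M] [Fintype ι] {n f g : ℕ} (s t : ℕ)
    (hn : 2 ≤ n) (hgf : g ≤ f) (hng : (n - 1) * f ≤ n * g) (hι : Fintype.card ι = n - 1)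
    (v : ι → M) (w : M) :
    ((∏ i, v i ^ g ^ 2) * w ^ (g * ((n - 1) * g - (n - 2) * f))) ^ (s * f + t * g) =
      (∏ i, v i ^ (f * g)) ^ (s * g + t * (2 * g - f)) *
        (w ^ (f * g)) ^ (s * ((n - 1) * g - (n - 2) * f) + t * (n * g - (n - 1) * f)) *
        (∏ i, v i ^ (f - g) * w ^ (f - g)) ^ (t * g * (f - g)) := by
  obtain ⟨k, rfl⟩ : ∃ k, n = k + 2 := ⟨n - 2, by omega⟩
  rw [show k + 2 - 1 = k + 1 by omega, Nat.add_sub_cancel] at *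
  have h2 : f ≤ 2 * g := by nlinarith
  have h3 : k * f ≤ (k + 1) * g := by nlinarith
  have hv : g ^ 2 * (s * f + t * g) =
      f * g * (s * g + t * (2 * g - f)) + (f - g) * (t * g * (f - g)) := by
    zify [hgf, h2]; ring
  have hw : g * ((k + 1) * g - k * f) * (s * f + t * g) =
      f * g * (s * ((k + 1) * g - k * f) + t * ((k + 2) * g - (k + 1) * f)) +
        (k + 1) * (f - g) * (t * g * (f - g)) := by
    zify [hgf, h2, h3, hng]; ring
  simp only [Finset.prod_mul_distrib, Finset.prod_pow, Finset.prod_const, Finset.card_univ, hι,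
    mul_pow, ← pow_mul]
  rw [hv, hw, pow_add, pow_add]
  exact mul_mul_mul_comm (G := M) _ _ _ _

theorem IsAlgClosed.exists_pow_eq_and_pow_mul_pow_eq {K : Type*} [Field K] [IsAlgClosed K]
    {d m : ℕ} (hd : d ≠ 0) (hm : m ≠ 0) (hdm : d.Coprime m) {x y xₙ uₙ : K}
    (huₙ : uₙ ^ m = xₙ) (hy : y ^ m = x ^ d * xₙ ^ d) : ∃ c, c ^ m = x ∧ c ^ d * uₙ ^ d = y := by
  by_cases h0 : uₙ = 0
  · subst h0 huₙ
    obtain ⟨c, hc⟩ := exists_pow_nat_eq x (Nat.pos_of_ne_zero hm)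
    rw [zero_pow hm, zero_pow hd, mul_zero, pow_eq_zero_iff hm] at hy
    exact ⟨c, hc, by rw [zero_pow hd, mul_zero, hy]⟩
  · rw [← mul_pow] at hy
    obtain ⟨z, rfl, hz⟩ := ((Commute.all _ _).pow_eq_pow_iff_of_coprime hdm.symm).mp hy
    refine ⟨z / uₙ, ?_, by rw [← mul_pow, div_mul_cancel₀ _ h0]⟩
    rw [div_pow, ← hz, huₙ, mul_div_cancel_right₀ _ (huₙ ▸ pow_ne_zero m h0)]

theorem exists_monomial_preimage {K ι : Type*} [Field K] [IsAlgClosed K] [Fintype ι] (p : ℕ)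
    [ExpChar K p] {n f g α s t : ℕ} (hco : f.Coprime g) (hg : 0 < g) (hgf : g < f) (hn : 2 ≤ n)
    (hng : (n - 1) * f ≤ n * g) (hι : Fintype.card ι = n - 1) (hpst : p ^ α = s * f + t * g)
    {x y : ι → K} {xₙ yₙ : K} (hy : ∀ i, y i ^ (f * g) = x i ^ (f - g) * xₙ ^ (f - g))
    (hyₙ : yₙ ^ p ^ α = (∏ i, x i) ^ (s * g + t * (2 * g - f)) *
      xₙ ^ (s * ((n - 1) * g - (n - 2) * f) + t * (n * g - (n - 1) * f)) *
      (∏ i, y i) ^ (t * g * (f - g))) :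
    ∃ (c : ι → K) (uₙ : K), uₙ ^ (f * g) = xₙ ∧ (∀ i, c i ^ (f * g) = x i) ∧
      (∀ i, c i ^ (f - g) * uₙ ^ (f - g) = y i) ∧
      (∏ i, c i ^ g ^ 2) * uₙ ^ (g * ((n - 1) * g - (n - 2) * f)) = yₙ := by
  have hfg : f * g ≠ 0 := (Nat.mul_pos (by omega) hg).ne'
  have hdm : (f - g).Coprime (f * g) :=
    Nat.Coprime.mul_right ((Nat.coprime_self_sub_left hgf.le).mpr hco.symm)
      ((Nat.coprime_sub_self_left hgf.le).mpr hco)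
  obtain ⟨uₙ, huₙ⟩ := IsAlgClosed.exists_pow_nat_eq xₙ (Nat.pos_of_ne_zero hfg)
  choose c hcx hcy using fun i =>
    IsAlgClosed.exists_pow_eq_and_pow_mul_pow_eq (by omega) hfg hdm huₙ (hy i)
  refine ⟨c, uₙ, huₙ, hcx, hcy, iterateFrobenius_inj K p α ?_⟩
  obtain rfl : x = fun i => c i ^ (f * g) := funext fun i => (hcx i).symm
  obtain rfl : y = fun i => c i ^ (f - g) * uₙ ^ (f - g) := funext fun i => (hcy i).symm
  subst huₙ
  rw [iterateFrobenius_def, iterateFrobenius_def, hyₙ, hpst]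
  exact last_monomial_pow_eq s t hn hgf.le hng hι c uₙ

theorem Fin.forall_iff_castLE_and_last {n : ℕ} (hn : 0 < n) {P : Fin n → Prop} :
    (∀ j, P j) ↔ (∀ i : Fin (n - 1), P (Fin.castLE (Nat.sub_le n 1) i)) ∧
      P ⟨n - 1, Nat.sub_lt hn Nat.one_pos⟩ := by
  refine ⟨fun h => ⟨fun i => h _, h _⟩, fun ⟨hcast, hlast⟩ j => ?_⟩
  by_cases hj : (j : ℕ) < n - 1
  · exact hcast ⟨j, hj⟩
  · obtain rfl : j = ⟨n - 1, Nat.sub_lt hn Nat.one_pos⟩ := Fin.ext (by simp only; omega)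
    exact hlast

theorem Fin.exists_castLE_and_last {α : Type*} {n : ℕ} (hn : 0 < n) (c : Fin (n - 1) → α)
    (b : α) :
    ∃ u : Fin n → α, (∀ i, u (Fin.castLE (Nat.sub_le n 1) i) = c i) ∧
      u ⟨n - 1, Nat.sub_lt hn Nat.one_pos⟩ = b :=
  ⟨fun j => if hj : (j : ℕ) < n - 1 then c ⟨j, hj⟩ else b, fun i => dif_pos i.2,
    dif_neg (lt_irrefl _)⟩

theorem MvPolynomial.eval_eq_zero_of_mem_ker {σ τ R : Type*} [CommRing R]
    (φ : MvPolynomial σ R →ₐ[R] MvPolynomial τ R) {a : σ → R} {u : τ → R}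
    (hu : ∀ w, eval u (φ (X w)) = a w) {F : MvPolynomial σ R} (hF : F ∈ RingHom.ker φ) :
    eval a F = 0 := by
  have h : aeval a = (aeval u).comp φ := algHom_ext fun w => by simpa using (hu w).symm
  simpa [RingHom.mem_ker.mp hF] using DFunLike.congr_fun h F

/-- In the setting of the paper (`n ≥ 3`, coprime `f > g > 0`,
`(n-1)f ≤ ng`), suppose `K` is algebraically closed of characteristic `p > 0` and
`p^α = sf + tg`. Then the zero set in `K^{2n}` of `ker φ` is the set of common zeros of
the `n` binomials `F₁, …, F_{n-1}, F_{n,p}`; i.e. `V` is a set-theoretic complete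
intersection on binomials in characteristic `p`. -/
theorem stmt10 (n : ℕ) (hn : 3 ≤ n) (f g : ℕ) (hco : Nat.Coprime f g)
    (hg : 0 < g) (hgf : g < f) (hng : (n - 1) * f ≤ n * g)
    (K : Type*) [Field K] [IsAlgClosed K]
    (p : ℕ) (hp : p.Prime) [CharP K p] (α s t : ℕ) (hpst : p ^ α = s * f + t * g)
    (φ : MvPolynomial (Fin n ⊕ Fin n) K →ₐ[K] MvPolynomial (Fin n) K)
    (hφx : ∀ i : Fin n, φ (X (Sum.inl i)) = X i ^ (f * g))
    (hφy : ∀ i : Fin (n - 1), φ (X (Sum.inr (Fin.castLE (by omega) i))) =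
      X (Fin.castLE (by omega) i : Fin n) ^ (f - g) * X (⟨n - 1, by omega⟩ : Fin n) ^ (f - g))
    (hφyn : φ (X (Sum.inr (⟨n - 1, by omega⟩ : Fin n))) =
      (∏ i : Fin (n - 1), X (Fin.castLE (by omega) i : Fin n) ^ g ^ 2) *
        X (⟨n - 1, by omega⟩ : Fin n) ^ (g * ((n - 1) * g - (n - 2) * f))) :
    {a : Fin n ⊕ Fin n → K | ∀ F ∈ RingHom.ker φ, eval a F = 0} =
    {a : Fin n ⊕ Fin n → K |
      (∀ i : Fin (n - 1),
        eval a (X (Sum.inr (Fin.castLE (by omega) i : Fin n)) ^ (f * g) -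
          X (Sum.inl (Fin.castLE (by omega) i : Fin n)) ^ (f - g) *
            X (Sum.inl (⟨n - 1, by omega⟩ : Fin n)) ^ (f - g) :
          MvPolynomial (Fin n ⊕ Fin n) K) = 0) ∧
      eval a (X (Sum.inr (⟨n - 1, by omega⟩ : Fin n)) ^ (p ^ α) -
        (∏ i : Fin (n - 1), X (Sum.inl (Fin.castLE (by omega) i : Fin n))) ^
            (s * g + t * (2 * g - f)) *
          X (Sum.inl (⟨n - 1, by omega⟩ : Fin n)) ^
            (s * ((n - 1) * g - (n - 2) * f) + t * (n * g - (n - 1) * f)) *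
          (∏ i : Fin (n - 1), X (Sum.inr (Fin.castLE (by omega) i : Fin n))) ^
            (t * g * (f - g)) :
        MvPolynomial (Fin n ⊕ Fin n) K) = 0} := by
  have := Fact.mk hp
  have hn0 : 0 < n := by omega
  ext a
  constructor
  · intro ha
    refine ⟨fun i => ha _ ?_, ha _ ?_⟩
    · rw [RingHom.mem_ker, map_sub, map_pow, map_mul, map_pow, map_pow, hφx, hφx, hφy, mul_pow,
        pow_right_comm _ (f - g), pow_right_comm _ (f - g), sub_self]
    · rw [RingHom.mem_ker, map_sub, map_pow, hφyn, hpst, sub_eq_zero]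
      simp only [map_mul, map_pow, map_prod, hφx, hφy]
      exact last_monomial_pow_eq s t (by omega) hgf.le hng (Fintype.card_fin _) _ _
  · rintro ⟨hy, hyₙ⟩
    simp only [map_sub, map_mul, map_pow, map_prod, eval_X, sub_eq_zero] at hy hyₙ
    obtain ⟨c, uₙ, huₙ, hcx, hcy, hcyₙ⟩ := exists_monomial_preimage p hco hg hgf (by omega) hng
      (Fintype.card_fin _) hpst hy hyₙ
    obtain ⟨u, hu, huₙ'⟩ := Fin.exists_castLE_and_last hn0 c uₙ
    have hφu : ∀ w, eval u (φ (X w)) = a w := by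
      simp only [Sum.forall, Fin.forall_iff_castLE_and_last hn0]
      simp [hφx, hφy, hφyn, hu, huₙ', hcx, huₙ, hcy, hcyₙ]
    exact fun F hF => eval_eq_zero_of_mem_ker φ hφu hF
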